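/- arXiv:math/0401156 — 5 statements merged into one kernel-verified Lean document; each statement's English description precedes it below -/
import Mathlib

section
/- Let L: l_1 ≥ l_2 ≥ ... be a nonincreasing summable sequence of positive reals and define V(ε) = 2ε + ∑_{j : l_j ≥ 2ε} 2ε + ∑_{j : l_j < 2ε} l_j for ε > 0. If d ∈ [0,1) and there is a constant C with V(ε) ≤ C·ε^{1-d} for all sufficiently small ε > 0, then the Dirichlet series ∑_j l_j^s converges for every real s > d. -/
/-- If `V(ε) ≤ C ε^{1-d}` for small `ε`, where
`V(ε) = 2ε + ∑_{l_j ≥ 2ε} 2ε + ∑_{l_j < 2ε} l_j`, then `∑ l_j^s` converges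
for all real `s > d`. -/
theorem stmt_1 (l : ℕ → ℝ) (hpos : ∀ n, 0 < l n) (hmono : Antitone l)
    (hsum : Summable l) (V : ℝ → ℝ)
    (hV : ∀ ε : ℝ, 0 < ε →
      V ε = 2 * ε + (∑' j : {j : ℕ // 2 * ε ≤ l j}, 2 * ε)
        + (∑' j : {j : ℕ // l j < 2 * ε}, l j.1))
    (d : ℝ) (hd0 : 0 ≤ d) (hd1 : d < 1) (C ε₀ : ℝ) (hε₀ : 0 < ε₀)
    (hC : ∀ ε : ℝ, 0 < ε → ε ≤ ε₀ → V ε ≤ C * ε ^ (1 - d)) :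
    ∀ s : ℝ, d < s → Summable fun j => l j ^ s := by
  -- Key estimate: for all n with l n ≤ 2 ε₀, (n+1) * l n ^ d ≤ C / 2^(1-d)
  set K : ℝ := C / 2 ^ (1 - d) with hK
  have key : ∀ n : ℕ, l n ≤ 2 * ε₀ → ((n : ℝ) + 1) * l n ^ d ≤ K := by
    intro n hn
    set ε : ℝ := l n / 2 with hε
    have hεpos : 0 < ε := div_pos (hpos n) two_pos
    have h2ε : 2 * ε = l n := by rw [hε]; ring
    -- finiteness of {j | l n ≤ l j}
    have hfin : {j : ℕ | 2 * ε ≤ l j}.Finite := by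
      have ht : Filter.Tendsto l Filter.atTop (nhds 0) := hsum.tendsto_atTop_zero
      have hev : ∀ᶠ j in Filter.atTop, l j < l n := ht.eventually (gt_mem_nhds (hpos n))
      obtain ⟨N, hN⟩ := Filter.eventually_atTop.1 hev
      refine (Set.finite_Iio N).subset ?_
      intro j hj
      by_contra h
      exact absurd (hN j (not_lt.1 h)) (not_lt.2 (h2ε ▸ hj))
    haveI : Fintype {j : ℕ // 2 * ε ≤ l j} := hfin.fintype
    -- lower bound on the tsum
    have hcard : n + 1 ≤ Fintype.card {j : ℕ // 2 * ε ≤ l j} := by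
      have : Function.Injective (fun i : Fin (n + 1) =>
          (⟨(i : ℕ), by rw [h2ε]; exact hmono (Nat.lt_succ_iff.1 i.2)⟩ :
            {j : ℕ // 2 * ε ≤ l j})) := by
        intro a b hab
        exact Fin.ext (congrArg Subtype.val hab)
      simpa using Fintype.card_le_of_injective _ this
    have htsum1 : ((n : ℝ) + 1) * l n ≤ ∑' _ : {j : ℕ // 2 * ε ≤ l j}, 2 * ε := by
      rw [tsum_fintype, Finset.sum_const, Finset.card_univ, nsmul_eq_mul]
      have := hpos n
      have hc : (n : ℝ) + 1 ≤ (Fintype.card {j : ℕ // 2 * ε ≤ l j} : ℝ) := by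
        exact_mod_cast hcard
      nlinarith
    have htsum2 : 0 ≤ ∑' j : {j : ℕ // l j < 2 * ε}, l j.1 :=
      tsum_nonneg fun j => (hpos j.1).le
    have hVlb : ((n : ℝ) + 1) * l n ≤ V ε := by
      rw [hV ε hεpos]
      have h0 : 0 < 2 * ε := by positivity
      linarith
    have hεε₀ : ε ≤ ε₀ := by rw [hε]; linarith
    have hub : ((n : ℝ) + 1) * l n ≤ C * ε ^ (1 - d) := hVlb.trans (hC ε hεpos hεε₀)
    -- rewrite ε^(1-d) = l n ^ (1-d) / 2^(1-d)
    have hεr : ε ^ (1 - d) = l n ^ (1 - d) / 2 ^ (1 - d) := by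
      rw [hε, Real.div_rpow (hpos n).le (by norm_num)]
    have hl : l n = l n ^ d * l n ^ (1 - d) := by
      rw [← Real.rpow_add (hpos n)]; norm_num
    have h2pow : (0:ℝ) < 2 ^ (1 - d) := Real.rpow_pos_of_pos (by norm_num) _
    have hlpow : (0:ℝ) < l n ^ (1 - d) := Real.rpow_pos_of_pos (hpos n) _
    rw [hεr] at hub
    have : ((n : ℝ) + 1) * (l n ^ d * l n ^ (1 - d)) ≤ C / 2 ^ (1 - d) * l n ^ (1 - d) := by
      rw [← hl]
      calc ((n : ℝ) + 1) * l n ≤ C * (l n ^ (1 - d) / 2 ^ (1 - d)) := hub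
        _ = C / 2 ^ (1 - d) * l n ^ (1 - d) := by ring
    have := (mul_le_mul_iff_of_pos_right hlpow).1 (by linarith [this] : ((n:ℝ)+1) * l n ^ d * l n ^ (1-d) ≤ C / 2 ^ (1-d) * l n ^ (1-d))
    exact this
  -- l n → 0, so eventually l n ≤ 2 ε₀
  have ht : Filter.Tendsto l Filter.atTop (nhds 0) := hsum.tendsto_atTop_zero
  obtain ⟨N₀, hN₀⟩ := Filter.eventually_atTop.1
    (ht.eventually (gt_mem_nhds (by positivity : (0:ℝ) < 2 * ε₀)))
  intro s hs
  rcases eq_or_lt_of_le hd0 with hd | hd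
  · -- d = 0 : derive contradiction
    exfalso
    set n : ℕ := max N₀ ⌈K⌉₊ with hn
    have h1 := key n (le_of_lt (hN₀ n (le_max_left _ _)))
    rw [← hd] at h1
    simp only [Real.rpow_zero, mul_one] at h1
    have h2 : K ≤ (⌈K⌉₊ : ℝ) := Nat.le_ceil K
    have h3 : (⌈K⌉₊ : ℝ) ≤ (n : ℝ) := by exact_mod_cast le_max_right N₀ ⌈K⌉₊
    linarith
  · -- d > 0
    have hsd : 1 < s / d := (one_lt_div hd).2 hs
    have hs0 : 0 < s := hd0.trans_lt hs
    -- bound: for n ≥ N₀, l n ^ s ≤ K^(s/d) / (n+1)^(s/d)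
    have hbound : ∀ n : ℕ, N₀ ≤ n → l n ^ s ≤ K ^ (s / d) / ((n : ℝ) + 1) ^ (s / d) := by
      intro n hn
      have h1 := key n (le_of_lt (hN₀ n hn))
      have hnp : (0:ℝ) < (n:ℝ) + 1 := by positivity
      have hld : (0:ℝ) < l n ^ d := Real.rpow_pos_of_pos (hpos n) _
      have h2 : l n ^ d ≤ K / ((n:ℝ) + 1) := by
        rw [le_div_iff₀ hnp]; linarith
      have hKpos : 0 < K / ((n:ℝ) + 1) := lt_of_lt_of_le hld h2
      have h3 : l n ≤ (K / ((n:ℝ) + 1)) ^ (1 / d) := by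
        have := Real.rpow_le_rpow hld.le h2 (by positivity : (0:ℝ) ≤ 1 / d)
        rwa [← Real.rpow_mul (hpos n).le,
          mul_one_div_cancel (ne_of_gt hd), Real.rpow_one] at this
      calc l n ^ s ≤ ((K / ((n:ℝ) + 1)) ^ (1 / d)) ^ s :=
            Real.rpow_le_rpow (hpos n).le h3 hs0.le
        _ = (K / ((n:ℝ) + 1)) ^ (s / d) := by
            rw [← Real.rpow_mul hKpos.le]; congr 1; field_simp
        _ = K ^ (s / d) / ((n:ℝ) + 1) ^ (s / d) := by
            have hK0 : 0 ≤ K := by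
              rcases div_pos_iff.1 hKpos with ⟨h, _⟩ | ⟨_, h2⟩
              · exact h.le
              · linarith
            rw [Real.div_rpow hK0 hnp.le]
    -- summability of the comparison series
    have hg : Summable (fun n : ℕ => K ^ (s / d) / ((n : ℝ) + 1) ^ (s / d)) := by
      have h0 : Summable (fun n : ℕ => 1 / (n : ℝ) ^ (s / d)) :=
        (Real.summable_one_div_nat_rpow).2 hsd
      have h1 : Summable (fun n : ℕ => 1 / ((n : ℝ) + 1) ^ (s / d)) := by
        have := (summable_nat_add_iff 1).2 h0
        simpa [Nat.cast_add] using this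
      simpa [div_eq_mul_inv, one_div, mul_comm] using h1.mul_left (K ^ (s / d))
    -- comparison after a shift
    apply (summable_nat_add_iff N₀).1
    apply Summable.of_nonneg_of_le (fun n => Real.rpow_nonneg (hpos _).le s)
      (fun n => ?_) hg
    have hb := hbound (n + N₀) (Nat.le_add_left _ _)
    refine hb.trans ?_
    have hKs : 0 ≤ K ^ (s / d) := Real.rpow_nonneg (by
      have h1 := key N₀ (le_of_lt (hN₀ N₀ le_rfl))
      have hld : (0:ℝ) < l N₀ ^ d := Real.rpow_pos_of_pos (hpos N₀) _
      nlinarith) _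
    have hd1' : (0:ℝ) < ((n:ℝ) + 1) ^ (s / d) :=
      Real.rpow_pos_of_pos (by positivity) _
    have hmonod : ((n:ℝ) + 1) ^ (s / d) ≤ ((↑(n + N₀) : ℝ) + 1) ^ (s / d) := by
      apply Real.rpow_le_rpow (by positivity) _ (by positivity)
      push_cast; linarith [Nat.cast_nonneg (α := ℝ) N₀]
    exact div_le_div_of_nonneg_left hKs hd1' hmonod
end

section
/- Let L: l_1 ≥ l_2 ≥ ... be a nonincreasing summable sequence of positive reals with V(ε) = 2ε + ∑_{l_j ≥ 2ε} 2ε + ∑_{l_j < 2ε} l_j. Then the abscissa of convergence of the Dirichlet series ζ_L(s) = ∑_j l_j^s equals the Minkowski dimension D = inf{ d ≥ 0 : ε^{d-1} V(ε) → 0 as ε → 0⁺ }. -/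
open Filter Set

private lemma rpow_tendsto_zero {a : ℝ} (ha : 0 < a) :
    Tendsto (fun ε : ℝ => ε ^ a) (nhdsWithin 0 (Ioi 0)) (nhds 0) := by
  have h := (Real.continuousAt_rpow_const 0 a (Or.inr ha.le)).tendsto
  rw [Real.zero_rpow ha.ne'] at h
  exact h.mono_left nhdsWithin_le_nhds

/-- The abscissa of convergence of `ζ_L(s) = ∑ l_j^s` equals the
Minkowski dimension `D = inf { d ≥ 0 : ε^{d-1} V(ε) → 0 as ε → 0⁺ }`. -/
theorem stmt_2 (l : ℕ → ℝ) (hpos : ∀ n, 0 < l n) (hmono : Antitone l)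
    (hsum : Summable l) (V : ℝ → ℝ)
    (hV : ∀ ε : ℝ, 0 < ε →
      V ε = 2 * ε + (∑' j : {j : ℕ // 2 * ε ≤ l j}, 2 * ε)
        + (∑' j : {j : ℕ // l j < 2 * ε}, l j.1)) :
    sInf {s : ℝ | Summable fun j => l j ^ s}
      = sInf {d : ℝ | 0 ≤ d ∧
          Tendsto (fun ε : ℝ => ε ^ (d - 1) * V ε) (nhdsWithin 0 (Ioi 0)) (nhds 0)} := by
  set S := {s : ℝ | Summable fun j => l j ^ s} with hSdef
  set Dset := {d : ℝ | 0 ≤ d ∧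
      Tendsto (fun ε : ℝ => ε ^ (d - 1) * V ε) (nhdsWithin 0 (Ioi 0)) (nhds 0)} with hDdef
  have hl0 : Tendsto l atTop (nhds 0) := hsum.tendsto_atTop_zero
  have hfin : ∀ c : ℝ, 0 < c → {j : ℕ | c ≤ l j}.Finite := by
    intro c hc
    obtain ⟨N, hN⟩ := eventually_atTop.1 (hl0.eventually (gt_mem_nhds hc))
    refine (Set.finite_Iio N).subset fun j hj => ?_
    by_contra h
    exact absurd hj (not_le.2 (hN j (not_lt.1 h)))
  have h1S : (1 : ℝ) ∈ S := by
    simp only [hSdef, mem_setOf_eq, Real.rpow_one]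
    exact hsum
  have hSpos : ∀ s ∈ S, 0 < s := by
    intro s hs
    by_contra h
    push_neg at h
    have hten : Tendsto (fun j => l j ^ s) atTop (nhds 0) :=
      Summable.tendsto_atTop_zero hs
    have hev : ∀ᶠ j in atTop, (1 : ℝ) ≤ l j ^ s := by
      filter_upwards [hl0.eventually (gt_mem_nhds one_pos)] with j hj
      exact Real.one_le_rpow_of_pos_of_le_one_of_nonpos (hpos j) hj.le h
    obtain ⟨j, h1, h2⟩ := (hev.and (hten.eventually (gt_mem_nhds one_pos))).exists
    linarith
  have hSbdd : BddBelow S := ⟨0, fun s hs => (hSpos s hs).le⟩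
  have hSne : S.Nonempty := ⟨1, h1S⟩
  have hσ0 : 0 ≤ sInf S := le_csInf hSne fun s hs => (hSpos s hs).le
  have hVlb : ∀ ε : ℝ, 0 < ε → 2 * ε ≤ V ε := by
    intro ε hε
    rw [hV ε hε]
    have h1 : 0 ≤ ∑' _ : {j : ℕ // 2 * ε ≤ l j}, 2 * ε :=
      tsum_nonneg fun _ => by positivity
    have h2 : 0 ≤ ∑' j : {j : ℕ // l j < 2 * ε}, l j.1 :=
      tsum_nonneg fun j => (hpos j.1).le
    linarith
  -- Direction B: every d > sInf S lies in Dset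
  have hB : ∀ d : ℝ, sInf S < d → d ∈ Dset := by
    intro d hd
    have hd0 : 0 < d := lt_of_le_of_lt hσ0 hd
    obtain ⟨s₀, hs₀S, hs₀d⟩ := exists_lt_of_csInf_lt hSne hd
    have hsS : Summable fun j => l j ^ min s₀ 1 := by
      rcases le_total s₀ 1 with h | h
      · rw [min_eq_left h]; exact hs₀S
      · rw [min_eq_right h]; exact h1S
    set s := min s₀ 1 with hs_def
    have hs1 : s ≤ 1 := min_le_right _ _
    have hsd : s < d := lt_of_le_of_lt (min_le_left _ _) hs₀d
    have hspos : 0 < s := lt_min (hSpos _ hs₀S) one_pos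
    set C := ∑' j, l j ^ s with hCdef
    have hC0 : 0 ≤ C := tsum_nonneg fun j => Real.rpow_nonneg (hpos j).le _
    refine ⟨hd0.le, ?_⟩
    have key : ∀ ε : ℝ, 0 < ε →
        ε ^ (d - 1) * V ε ≤ 2 * ε ^ d + (2 * 2 ^ (1 - s) * C) * ε ^ (d - s) := by
      intro ε hε
      have h2ε : (0 : ℝ) < 2 * ε := by linarith
      have hsub1 : Summable fun j : {j : ℕ // 2 * ε ≤ l j} => l j.1 ^ s :=
        hsS.subtype {j : ℕ | 2 * ε ≤ l j}
      have hsub2 : Summable fun j : {j : ℕ // l j < 2 * ε} => l j.1 ^ s :=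
        hsS.subtype {j : ℕ | l j < 2 * ε}
      have hmid : (∑' _ : {j : ℕ // 2 * ε ≤ l j}, 2 * ε)
          ≤ (2 * ε) ^ (1 - s) * C := by
        have hfin' : Finite {j : ℕ // 2 * ε ≤ l j} := hfin (2 * ε) h2ε
        have hpt : ∀ j : {j : ℕ // 2 * ε ≤ l j},
            2 * ε ≤ (2 * ε) ^ (1 - s) * l j.1 ^ s := by
          intro j
          have h1 : (2 * ε) ^ s ≤ l j.1 ^ s := Real.rpow_le_rpow h2ε.le j.2 hspos.le
          have h2 : (2 * ε) ^ (1 - s) * (2 * ε) ^ s = 2 * ε := by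
            rw [← Real.rpow_add h2ε]
            norm_num
          calc 2 * ε = (2 * ε) ^ (1 - s) * (2 * ε) ^ s := h2.symm
            _ ≤ (2 * ε) ^ (1 - s) * l j.1 ^ s :=
                mul_le_mul_of_nonneg_left h1 (Real.rpow_nonneg h2ε.le _)
        calc (∑' _ : {j : ℕ // 2 * ε ≤ l j}, 2 * ε)
            ≤ ∑' j : {j : ℕ // 2 * ε ≤ l j}, (2 * ε) ^ (1 - s) * l j.1 ^ s :=
              Summable.tsum_le_tsum hpt Summable.of_finite (hsub1.mul_left _)
          _ = (2 * ε) ^ (1 - s) * ∑' j : {j : ℕ // 2 * ε ≤ l j}, l j.1 ^ s :=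
              tsum_mul_left
          _ ≤ (2 * ε) ^ (1 - s) * C := by
              refine mul_le_mul_of_nonneg_left ?_ (Real.rpow_nonneg h2ε.le _)
              exact Summable.tsum_subtype_le (fun j => l j ^ s) _
                (fun j => Real.rpow_nonneg (hpos j).le _) hsS
      have htail : (∑' j : {j : ℕ // l j < 2 * ε}, l j.1)
          ≤ (2 * ε) ^ (1 - s) * C := by
        have hpt : ∀ j : {j : ℕ // l j < 2 * ε},
            l j.1 ≤ (2 * ε) ^ (1 - s) * l j.1 ^ s := by
          intro j
          have h1 : l j.1 ^ (1 - s) ≤ (2 * ε) ^ (1 - s) :=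
            Real.rpow_le_rpow (hpos j.1).le j.2.le (by linarith)
          have h2 : l j.1 ^ (1 - s) * l j.1 ^ s = l j.1 := by
            rw [← Real.rpow_add (hpos j.1)]
            norm_num
          calc l j.1 = l j.1 ^ (1 - s) * l j.1 ^ s := h2.symm
            _ ≤ (2 * ε) ^ (1 - s) * l j.1 ^ s :=
                mul_le_mul_of_nonneg_right h1 (Real.rpow_nonneg (hpos j.1).le _)
        calc (∑' j : {j : ℕ // l j < 2 * ε}, l j.1)
            ≤ ∑' j : {j : ℕ // l j < 2 * ε}, (2 * ε) ^ (1 - s) * l j.1 ^ s :=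
              Summable.tsum_le_tsum hpt (hsum.subtype _) (hsub2.mul_left _)
          _ = (2 * ε) ^ (1 - s) * ∑' j : {j : ℕ // l j < 2 * ε}, l j.1 ^ s :=
              tsum_mul_left
          _ ≤ (2 * ε) ^ (1 - s) * C := by
              refine mul_le_mul_of_nonneg_left ?_ (Real.rpow_nonneg h2ε.le _)
              exact Summable.tsum_subtype_le (fun j => l j ^ s) _
                (fun j => Real.rpow_nonneg (hpos j).le _) hsS
      have hVub : V ε ≤ 2 * ε + 2 * ((2 * ε) ^ (1 - s) * C) := by
        rw [hV ε hε]; linarith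
      have hεd : (0 : ℝ) ≤ ε ^ (d - 1) := Real.rpow_nonneg hε.le _
      have e1 : ε ^ (d - 1) * ε = ε ^ d := by
        have h := Real.rpow_add hε (d - 1) 1
        rw [Real.rpow_one] at h
        rw [← h]
        congr 1
        ring
      have e2 : ε ^ (d - 1) * ε ^ (1 - s) = ε ^ (d - s) := by
        rw [← Real.rpow_add hε]
        congr 1
        ring
      calc ε ^ (d - 1) * V ε
          ≤ ε ^ (d - 1) * (2 * ε + 2 * ((2 * ε) ^ (1 - s) * C)) :=
            mul_le_mul_of_nonneg_left hVub hεd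
        _ = ε ^ (d - 1) * (2 * ε + 2 * (2 ^ (1 - s) * ε ^ (1 - s) * C)) := by
            rw [Real.mul_rpow (by norm_num : (0:ℝ) ≤ 2) hε.le]
        _ = 2 * (ε ^ (d - 1) * ε) + (2 * 2 ^ (1 - s) * C) * (ε ^ (d - 1) * ε ^ (1 - s)) := by
            ring
        _ = 2 * ε ^ d + (2 * 2 ^ (1 - s) * C) * ε ^ (d - s) := by rw [e1, e2]
    have hub : Tendsto (fun ε : ℝ => 2 * ε ^ d + (2 * 2 ^ (1 - s) * C) * ε ^ (d - s))
        (nhdsWithin 0 (Ioi 0)) (nhds 0) := by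
      have t1 := (rpow_tendsto_zero hd0).const_mul (2 : ℝ)
      have t2 := (rpow_tendsto_zero (show (0:ℝ) < d - s by linarith)).const_mul
        (2 * 2 ^ (1 - s) * C)
      simpa using t1.add t2
    refine tendsto_of_tendsto_of_tendsto_of_le_of_le' tendsto_const_nhds hub ?_ ?_
    · filter_upwards [self_mem_nhdsWithin] with ε hε
      have hε' : (0 : ℝ) < ε := hε
      have hVnn : 0 ≤ V ε := le_trans (by linarith) (hVlb ε hε')
      exact mul_nonneg (Real.rpow_nonneg hε'.le _) hVnn
    · filter_upwards [self_mem_nhdsWithin] with ε hε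
      exact key ε hε
  -- Direction C: every d ∈ Dset dominates sInf S
  have hCle : ∀ d ∈ Dset, sInf S ≤ d := by
    rintro d ⟨hd0, hdt⟩
    have hdpos : 0 < d := by
      rcases hd0.lt_or_eq with h | h
      · exact h
      · exfalso
        subst h
        have hev : ∀ᶠ ε in nhdsWithin (0:ℝ) (Ioi 0), (2:ℝ) ≤ ε ^ ((0:ℝ) - 1) * V ε := by
          filter_upwards [self_mem_nhdsWithin] with ε hε
          have hε' : (0 : ℝ) < ε := hε
          have h1 : ε ^ ((0:ℝ) - 1) * (2 * ε) ≤ ε ^ ((0:ℝ) - 1) * V ε :=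
            mul_le_mul_of_nonneg_left (hVlb ε hε') (Real.rpow_nonneg hε'.le _)
          have h2 : ε ^ ((0:ℝ) - 1) * (2 * ε) = 2 := by
            rw [show (0:ℝ) - 1 = -1 by norm_num, Real.rpow_neg_one]
            field_simp
          linarith
        obtain ⟨ε, hA, hB2⟩ := (hev.and (hdt.eventually (gt_mem_nhds one_pos))).exists
        linarith
    have hseq : Tendsto (fun n => l n / 2) atTop (nhdsWithin (0:ℝ) (Ioi 0)) := by
      apply tendsto_nhdsWithin_of_tendsto_nhds_of_eventually_within
      · simpa using hl0.div_const 2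
      · exact Eventually.of_forall fun n => mem_Ioi.2 (div_pos (hpos n) two_pos)
    have hkey : ∀ᶠ n : ℕ in atTop, ((n:ℝ) + 1) * l n ^ d ≤ 2 ^ (d - 1) := by
      filter_upwards [hseq.eventually (hdt.eventually (gt_mem_nhds one_pos))] with n hn
      set ε := l n / 2 with hεdef
      have hε : 0 < ε := div_pos (hpos n) two_pos
      have h2ε : 2 * ε = l n := by rw [hεdef]; ring
      have hfin' : {j : ℕ | 2 * ε ≤ l j}.Finite := hfin (2 * ε) (by linarith)
      have hcard : (n + 1 : ℕ) ≤ Nat.card {j : ℕ // 2 * ε ≤ l j} := by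
        have hsub : (Finset.range (n+1) : Set ℕ) ⊆ {j : ℕ | 2 * ε ≤ l j} := by
          intro j hj
          simp only [Finset.coe_range, mem_Iio] at hj
          have hjn : j ≤ n := by omega
          have : l n ≤ l j := hmono hjn
          simp only [mem_setOf_eq, h2ε]
          exact this
        calc (n + 1 : ℕ) = (Finset.range (n+1)).card := (Finset.card_range _).symm
          _ = ((Finset.range (n+1) : Set ℕ)).ncard := (Set.ncard_coe_finset _).symm
          _ ≤ ({j : ℕ | 2 * ε ≤ l j}).ncard := Set.ncard_le_ncard hsub hfin'
          _ = Nat.card {j : ℕ // 2 * ε ≤ l j} := (Nat.card_coe_set_eq _).symm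
      have htsum : (∑' _ : {j : ℕ // 2 * ε ≤ l j}, 2 * ε)
          = (Nat.card {j : ℕ // 2 * ε ≤ l j} : ℝ) * (2 * ε) := by
        haveI : Fintype {j : ℕ // 2 * ε ≤ l j} := hfin'.fintype
        rw [tsum_fintype, Finset.sum_const, Finset.card_univ, nsmul_eq_mul,
          Nat.card_eq_fintype_card]
      have hVge : ((n:ℝ) + 1) * l n ≤ V ε := by
        rw [hV ε hε]
        have ht2 : 0 ≤ ∑' j : {j : ℕ // l j < 2 * ε}, l j.1 :=
          tsum_nonneg fun j => (hpos j.1).le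
        have hmidge : ((n:ℝ) + 1) * l n ≤ (∑' _ : {j : ℕ // 2 * ε ≤ l j}, 2 * ε) := by
          rw [htsum, h2ε]
          refine mul_le_mul_of_nonneg_right ?_ (hpos n).le
          have hcard' : (n + 1 : ℕ) ≤ Nat.card {j : ℕ // l n ≤ l j} := by
            simpa [h2ε] using hcard
          exact_mod_cast hcard'
        linarith
      have hεpow : (0:ℝ) < ε ^ (d - 1) := Real.rpow_pos_of_pos hε _
      have step : ((n:ℝ) + 1) * l n * ε ^ (d - 1) ≤ 1 := by
        have h1 := mul_le_mul_of_nonneg_left hVge hεpow.le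
        nlinarith [hn]
      have hεpow_eq : ε ^ (d - 1) = l n ^ (d - 1) / 2 ^ (d - 1) := by
        rw [hεdef, Real.div_rpow (hpos n).le (by norm_num : (0:ℝ) ≤ 2)]
      have hl_eq : l n * l n ^ (d - 1) = l n ^ d := by
        have h := Real.rpow_add (hpos n) 1 (d - 1)
        rw [Real.rpow_one] at h
        rw [← h]
        congr 1
        ring
      have h2pos : (0:ℝ) < 2 ^ (d - 1) := Real.rpow_pos_of_pos two_pos _
      rw [hεpow_eq] at step
      calc ((n:ℝ) + 1) * l n ^ d = ((n:ℝ) + 1) * (l n * l n ^ (d - 1)) := by rw [hl_eq]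
        _ = (((n:ℝ) + 1) * l n * (l n ^ (d - 1) / 2 ^ (d - 1))) * 2 ^ (d - 1) := by
            field_simp
        _ ≤ 1 * 2 ^ (d - 1) := mul_le_mul_of_nonneg_right step h2pos.le
        _ = 2 ^ (d - 1) := one_mul _
    have hsummS : ∀ s : ℝ, d < s → s ∈ S := by
      intro s hs
      obtain ⟨N, hN⟩ := eventually_atTop.1 hkey
      set p := s / d with hp
      have hp1 : 1 < p := (one_lt_div hdpos).2 hs
      set g : ℕ → ℝ := fun k => ((2:ℝ) ^ (d - 1)) ^ p / ((k:ℝ) + 1) ^ p with hg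
      have hgsum : Summable g := by
        have h0 : Summable fun n : ℕ => (((n:ℝ) + 1) ^ p)⁻¹ := by
          have h1 := Real.summable_nat_rpow_inv.2 hp1
          have h2 := (summable_nat_add_iff 1).2 h1
          simpa [Nat.cast_add, Nat.cast_one] using h2
        simpa [hg, div_eq_mul_inv] using h0.mul_left (((2:ℝ) ^ (d - 1)) ^ p)
      have hshift : Summable fun n : ℕ => l (n + N) ^ s := by
        refine Summable.of_nonneg_of_le (fun n => Real.rpow_nonneg (hpos _).le _)
          (fun n => ?_) ((summable_nat_add_iff N).2 hgsum)
        have hb := hN (n + N) (Nat.le_add_left N n)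
        set m := n + N with hm
        have hm1 : (0:ℝ) < (m:ℝ) + 1 := by positivity
        have h1 : l m ^ d ≤ 2 ^ (d - 1) / ((m:ℝ) + 1) := by
          rw [le_div_iff₀ hm1]
          nlinarith [hb]
        have h2 : l m ^ s = (l m ^ d) ^ p := by
          rw [← Real.rpow_mul (hpos m).le]
          congr 1
          rw [hp, mul_div_cancel₀ s hdpos.ne']
        rw [h2]
        calc (l m ^ d) ^ p ≤ (2 ^ (d - 1) / ((m:ℝ) + 1)) ^ p :=
              Real.rpow_le_rpow (Real.rpow_nonneg (hpos m).le _) h1 (by positivity)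
          _ = ((2:ℝ) ^ (d - 1)) ^ p / (((m:ℝ)) + 1) ^ p :=
              Real.div_rpow (Real.rpow_nonneg (by norm_num) _) (by positivity) _
      exact (summable_nat_add_iff N).1 hshift
    exact le_of_forall_gt_imp_ge_of_dense fun a ha => csInf_le hSbdd (hsummS a ha)
  have hDne : Dset.Nonempty := ⟨sInf S + 1, hB _ (lt_add_one _)⟩
  have hDbdd : BddBelow Dset := ⟨0, fun d hd => hd.1⟩
  refine le_antisymm (le_csInf hDne hCle) ?_
  exact le_of_forall_gt_imp_ge_of_dense fun a ha => csInf_le hDbdd (hB a ha)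
end

section
/- Let φ = (1+√5)/2 and D = log₂φ, p = 2π/log 2. The complex solutions of 2^{-ω} + 2^{-2ω} = 1 are exactly ω = D + inp for n ∈ ℤ, together with ω = −D − ip/2 + inp for n ∈ ℤ. -/
/-!
With `z = 2^{-ω}` the equation reads `z + z² = 1`, whose roots are `φ⁻¹ = exp (-log φ)` and
`-φ = exp (log φ + πi)`. Since `2^{-ω} = exp (-ω log 2)`, each root determines `ω` up to the
period `2πi / log 2` of `ω ↦ 2^{-ω}`.
-/

open Complex Real

theorem add_sq_eq_one_iff_goldenRatio (z : ℂ) :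
    z + z ^ 2 = 1 ↔ z = (goldenRatio : ℂ)⁻¹ ∨ z = -(goldenRatio : ℂ) := by
  have hdiff : (goldenRatio : ℂ) - (goldenRatio : ℂ)⁻¹ = 1 := by
    rw [← ofReal_inv, inv_goldenRatio, ← ofReal_one, ← goldenRatio_add_goldenConj]
    push_cast
    ring
  have hne : (goldenRatio : ℂ) ≠ 0 := mod_cast goldenRatio_ne_zero
  have hfactor : z + z ^ 2 - 1 = (z - (goldenRatio : ℂ)⁻¹) * (z + goldenRatio) := by
    linear_combination (-z) * hdiff + inv_mul_cancel₀ hne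
  rw [← sub_eq_zero, hfactor, mul_eq_zero, sub_eq_zero, add_eq_zero_iff_eq_neg]

theorem ofReal_cpow_neg_eq_exp_iff {b : ℝ} (hb : 1 < b) (ω s : ℂ) :
    (b : ℂ) ^ (-ω) = exp s ↔ ∃ n : ℤ, ω = -s / Real.log b + n * (2 * π / Real.log b) * I := by
  have hlog : (Real.log b : ℂ) ≠ 0 := mod_cast (Real.log_pos hb).ne'
  rw [cpow_def_of_ne_zero (mod_cast (zero_lt_one.trans hb).ne'), ← ofReal_log (by linarith),
    exp_eq_exp_iff_exists_int]
  refine (Equiv.neg ℤ).exists_congr fun n => ?_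
  simp only [Equiv.neg_apply, Int.cast_neg]
  constructor <;> intro h
  · field_simp
    linear_combination -h
  · rw [h]
    field_simp
    ring

/-- The complex solutions of `2^{-ω} + 2^{-2ω} = 1` are exactly
`ω = D + inp` and `ω = -D - ip/2 + inp`, `n ∈ ℤ`, with `D = log₂ φ`,
`p = 2π/log 2`. -/
theorem stmt_14 (φ D p : ℝ) (hφ : φ = (1 + Real.sqrt 5) / 2)
    (hD : D = Real.logb 2 φ) (hp : p = 2 * Real.pi / Real.log 2) :
    ∀ ω : ℂ, (2 : ℂ) ^ (-ω) + (2 : ℂ) ^ (-2 * ω) = 1 ↔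
      ((∃ n : ℤ, ω = (D : ℂ) + n * p * Complex.I) ∨
       (∃ n : ℤ, ω = -(D : ℂ) - (p / 2 : ℝ) * Complex.I + n * p * Complex.I)) := by
  intro ω
  obtain rfl : φ = goldenRatio := hφ
  have hinv : (goldenRatio : ℂ)⁻¹ = exp (-(Real.log goldenRatio : ℂ)) := by
    rw [← ofReal_inv, ← ofReal_neg, ← ofReal_exp, Real.exp_neg, Real.exp_log goldenRatio_pos]
  have hneg : -((goldenRatio : ℝ) : ℂ) = exp (Real.log goldenRatio + π * I) := by
    rw [Complex.exp_add, exp_pi_mul_I, ← ofReal_exp, Real.exp_log goldenRatio_pos, mul_neg_one]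
  have hsq : (2 : ℂ) ^ (-2 * ω) = ((2 : ℂ) ^ (-ω)) ^ 2 := by
    rw [← cpow_nat_mul]
    ring_nf
  rw [hsq, add_sq_eq_one_iff_goldenRatio, hinv, hneg, show (2 : ℂ) = ((2 : ℝ) : ℂ) by norm_num,
    ofReal_cpow_neg_eq_exp_iff one_lt_two, ofReal_cpow_neg_eq_exp_iff one_lt_two,
    hD, hp, Real.logb]
  refine or_congr (exists_congr fun n => ?_) (exists_congr fun n => ?_) <;> push_cast <;> ring_nf
end

section
/- Let r ∈ (0,1), D ∈ (0,1), p = 2π/log r^{-1}. For x ∈ ℝ, the Fourier series ∑_{n∈ℤ} e^{2πinx}/((D + inp)(1 − D − inp)) converges and equals (log r^{-1})·( r^{D{x}}/(1 − r^D) + r^{(D−1){x}}/(r^{D−1} − 1) ), where {x} denotes the fractional part of x. -/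
open Complex Real

/-- The Fourier series
`∑_{n∈ℤ} e^{2πinx}/((D+inp)(1-D-inp))` converges to
`log r⁻¹ · (r^{D{x}}/(1-r^D) + r^{(D-1){x}}/(r^{D-1}-1))`. -/
theorem stmt_16 (r D p : ℝ) (hr0 : 0 < r) (hr1 : r < 1)
    (hD0 : 0 < D) (hD1 : D < 1) (hp : p = 2 * Real.pi / Real.log r⁻¹) :
    ∀ x : ℝ, HasSum
      (fun n : ℤ => Complex.exp (2 * Real.pi * Complex.I * n * x) /
        (((D : ℂ) + n * p * Complex.I) * (1 - (D : ℂ) - n * p * Complex.I)))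
      ((Real.log r⁻¹ * (r ^ (D * Int.fract x) / (1 - r ^ D)
          + r ^ ((D - 1) * Int.fract x) / (r ^ (D - 1) - 1)) : ℝ) : ℂ) := by
  intro x
  haveI : Fact ((0:ℝ) < 1) := ⟨zero_lt_one⟩
  set L : ℝ := Real.log r⁻¹ with hLdef
  have hL0 : 0 < L := Real.log_pos (by rw [lt_inv_comm₀] <;> simpa)
  have hlogr : Real.log r = -L := by
    rw [hLdef, Real.log_inv]; ring
  have hpL : p * L = 2 * Real.pi := by
    rw [hp]; field_simp
  have hrD : r ^ D < 1 := Real.rpow_lt_one hr0.le hr1 hD0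
  have hrD0 : (0:ℝ) < r ^ D := Real.rpow_pos_of_pos hr0 _
  have hrD1 : 1 < r ^ (D - 1) := by
    rw [Real.one_lt_rpow_iff_of_pos hr0]
    right; exact ⟨hr1, by linarith⟩
  set F : ℝ → ℂ := fun t => ((L * (r ^ (D * t) / (1 - r ^ D)
      + r ^ ((D - 1) * t) / (r ^ (D - 1) - 1)) : ℝ) : ℂ) with hFdef
  -- endpoint matching
  have hd1 : (1 : ℝ) - r ^ D ≠ 0 := by linarith
  have hd2 : r ^ (D - 1) - 1 ≠ 0 := by linarith
  have hF01 : F 0 = F 1 := by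
    simp only [hFdef]
    norm_cast
    rw [mul_zero, mul_zero, mul_one, mul_one, Real.rpow_zero]
    congr 1
    field_simp
    ring
  -- continuity
  have hFrw : ∀ t : ℝ, F t = ((L * (Real.exp (Real.log r * (D * t)) / (1 - r ^ D)
      + Real.exp (Real.log r * ((D - 1) * t)) / (r ^ (D - 1) - 1)) : ℝ) : ℂ) := by
    intro t
    simp only [hFdef, Real.rpow_def_of_pos hr0]
  have hFcont : Continuous F := by
    have : Continuous fun t : ℝ => ((L * (Real.exp (Real.log r * (D * t)) / (1 - r ^ D)
        + Real.exp (Real.log r * ((D - 1) * t)) / (r ^ (D - 1) - 1)) : ℝ) : ℂ) := by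
      fun_prop
    exact this.congr fun t => (hFrw t).symm
  set g : AddCircle (1:ℝ) → ℂ := AddCircle.liftIco 1 0 F with hgdef
  have hgcont : Continuous g :=
    AddCircle.liftIco_zero_continuous (by rw [hF01]) hFcont.continuousOn
  -- nonvanishing of complex denominators
  have hDne : ∀ n : ℤ, ((D : ℂ) + n * p * Complex.I) ≠ 0 := by
    intro n h
    have h1 := congrArg Complex.re h
    simp [Complex.add_re, Complex.mul_re] at h1
    linarith
  have h1Dne : ∀ n : ℤ, (1 - (D : ℂ) - n * p * Complex.I) ≠ 0 := by
    intro n h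
    have h1 := congrArg Complex.re h
    simp [Complex.sub_re, Complex.mul_re] at h1
    linarith
  have hLne : (L : ℂ) ≠ 0 := by exact_mod_cast hL0.ne'
  -- the two exponents
  set μ : ℝ → ℤ → ℂ := fun a n => ((a * Real.log r : ℝ) : ℂ) - 2 * π * Complex.I * n
    with hμdef
  have hμ1 : ∀ n : ℤ, μ D n = -(L : ℂ) * ((D : ℂ) + n * p * Complex.I) := by
    intro n
    simp only [hμdef, hlogr, hp]
    push_cast
    field_simp
    ring
  have hμ2 : ∀ n : ℤ, μ (D - 1) n = (L : ℂ) * (1 - (D : ℂ) - n * p * Complex.I) := by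
    intro n
    simp only [hμdef, hlogr, hp]
    push_cast
    field_simp
    ring
  have hμ1ne : ∀ n : ℤ, μ D n ≠ 0 := by
    intro n
    rw [hμ1 n]
    exact mul_ne_zero (neg_ne_zero.mpr hLne) (hDne n)
  have hμ2ne : ∀ n : ℤ, μ (D - 1) n ≠ 0 := by
    intro n
    rw [hμ2 n]
    exact mul_ne_zero hLne (h1Dne n)
  -- the constants
  set c1 : ℂ := ((L / (1 - r ^ D) : ℝ) : ℂ) with hc1def
  set c2 : ℂ := ((L / (r ^ (D - 1) - 1) : ℝ) : ℂ) with hc2def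
  -- integrand rewriting
  have hintg : ∀ n : ℤ, ∀ t : ℝ,
      (fourier (-n) (t : AddCircle (1:ℝ)) : ℂ) * F t
        = c1 * Complex.exp (μ D n * t) + c2 * Complex.exp (μ (D - 1) n * t) := by
    have key : ∀ (a : ℝ) (m : ℤ) (t : ℝ),
        Complex.exp (((Real.log r : ℝ) : ℂ) * ((a : ℂ) * (t : ℂ)))
          * Complex.exp (2 * (π : ℂ) * Complex.I * ((-m : ℤ) : ℂ) * (t : ℂ) / 1)
          = Complex.exp (μ a m * t) := by
      intro a m t
      rw [← Complex.exp_add]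
      congr 1
      simp only [hμdef]
      push_cast
      ring
    intro n t
    rw [fourier_coe_apply, hFrw t, hc1def, hc2def,
      ← key D n t, ← key (D - 1) n t]
    push_cast
    ring
  -- exp values at the endpoints
  have hexp1 : ∀ (a : ℝ) (n : ℤ), Complex.exp (μ a n * ((1:ℝ):ℂ)) = ((r ^ a : ℝ) : ℂ) := by
    intro a n
    have h1 : Complex.exp (-(2 * (π:ℂ) * Complex.I * n)) = 1 := by
      rw [show -(2 * (π:ℂ) * Complex.I * (n:ℂ)) = ((-n : ℤ) : ℂ) * (2 * π * Complex.I) by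
        push_cast; ring, Complex.exp_int_mul_two_pi_mul_I]
    rw [Complex.ofReal_one, mul_one, hμdef]
    simp only [sub_eq_add_neg, Complex.exp_add, h1, mul_one]
    rw [← Complex.ofReal_exp]
    norm_cast
    rw [Real.rpow_def_of_pos hr0, mul_comm]
  have hexp0 : ∀ (a : ℝ) (n : ℤ), Complex.exp (μ a n * ((0:ℝ):ℂ)) = 1 := by
    intro a n; rw [Complex.ofReal_zero, mul_zero, Complex.exp_zero]
  -- the Fourier coefficients of g
  have hcoeff : ∀ n : ℤ, fourierCoeff g n
      = 1 / (((D : ℂ) + n * p * Complex.I) * (1 - (D : ℂ) - n * p * Complex.I)) := by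
    intro n
    have hgF : ∀ t ∈ Set.Icc (0:ℝ) 1, g ((t : ℝ) : AddCircle (1:ℝ)) = F t := by
      intro t ht
      rcases eq_or_lt_of_le ht.2 with h1 | h1
      · rw [h1]
        have hco : ((1:ℝ) : AddCircle (1:ℝ)) = ((0:ℝ) : AddCircle (1:ℝ)) := by
          rw [AddCircle.coe_period, QuotientAddGroup.mk_zero]
        rw [hco, hgdef,
          AddCircle.liftIco_zero_coe_apply (by constructor <;> norm_num), hF01]
      · rw [hgdef, AddCircle.liftIco_zero_coe_apply ⟨ht.1, h1⟩]
    rw [fourierCoeff_eq_intervalIntegral g n 0]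
    simp only [zero_add, one_div_one, one_smul, smul_eq_mul]
    rw [intervalIntegral.integral_congr
      (g := fun t : ℝ => (fourier (-n) ((t : ℝ) : AddCircle (1:ℝ)) : ℂ) * F t)
      (fun t ht => by
        rw [hgF t (by rwa [Set.uIcc_of_le zero_le_one] at ht)])]
    simp only [hintg n]
    have i1 : IntervalIntegrable (fun t : ℝ => c1 * Complex.exp (μ D n * t))
        MeasureTheory.volume 0 1 := by
      apply Continuous.intervalIntegrable
      fun_prop
    have i2 : IntervalIntegrable (fun t : ℝ => c2 * Complex.exp (μ (D - 1) n * t))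
        MeasureTheory.volume 0 1 := by
      apply Continuous.intervalIntegrable
      fun_prop
    rw [intervalIntegral.integral_add i1 i2, intervalIntegral.integral_const_mul,
      intervalIntegral.integral_const_mul, integral_exp_mul_complex (hμ1ne n),
      integral_exp_mul_complex (hμ2ne n), hexp1, hexp1, hexp0, hexp0, hμ1, hμ2,
      hc1def, hc2def]
    have hd1c : (1:ℂ) - ((r ^ D : ℝ) : ℂ) ≠ 0 := by
      intro h; apply hd1; exact_mod_cast h
    have hd2c : ((r ^ (D - 1) : ℝ) : ℂ) - 1 ≠ 0 := by
      intro h; apply hd2; exact_mod_cast h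
    push_cast
    field_simp [hDne n, h1Dne n, hLne, hd1c, hd2c]
    ring
  -- summability
  have hsummable : Summable (fourierCoeff g) := by
    apply Summable.of_norm_bounded_eventually
      (g := fun n : ℤ => (1 / (p * p)) * (1 / (n : ℝ) ^ 2))
    · exact ((summable_one_div_int_pow.mpr one_lt_two).mul_left _)
    · have hp0 : 0 < p := by rw [hp]; positivity
      have : {n : ℤ | ¬ ‖fourierCoeff g n‖ ≤ (1 / (p * p)) * (1 / (n : ℝ) ^ 2)} ⊆ {0} := by
        intro n hn
        simp only [Set.mem_setOf_eq] at hn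
        by_contra h0
        apply hn
        have hn0 : n ≠ 0 := by simpa using h0
        have hn1 : (1 : ℝ) ≤ |(n : ℝ)| := by
          rw [← Int.cast_abs]
          exact_mod_cast Int.one_le_abs (by simpa using hn0)
        rw [hcoeff n]
        rw [norm_div, norm_one, norm_mul]
        have b1 : |(n : ℝ)| * p ≤ ‖(D : ℂ) + n * p * Complex.I‖ := by
          have := Complex.abs_im_le_norm ((D : ℂ) + n * p * Complex.I)
          have him : ((D : ℂ) + n * p * Complex.I).im = n * p := by
            simp [Complex.add_im, Complex.mul_im]
          rw [him] at this
          calc |(n : ℝ)| * p = |(n : ℝ) * p| := by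
                rw [abs_mul, abs_of_pos hp0]
            _ ≤ _ := this
        have b2 : |(n : ℝ)| * p ≤ ‖1 - (D : ℂ) - n * p * Complex.I‖ := by
          have := Complex.abs_im_le_norm (1 - (D : ℂ) - n * p * Complex.I)
          have him : (1 - (D : ℂ) - n * p * Complex.I).im = -(n * p) := by
            simp [Complex.sub_im, Complex.mul_im]
          rw [him, abs_neg] at this
          calc |(n : ℝ)| * p = |(n : ℝ) * p| := by
                rw [abs_mul, abs_of_pos hp0]
            _ ≤ _ := this
        have hnp0 : 0 < |(n : ℝ)| * p := by positivity
        rw [div_le_iff₀ (lt_of_lt_of_le (by positivity)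
          (mul_le_mul b1 b2 hnp0.le (norm_nonneg _)))]
        calc (1:ℝ) = (1 / (p * p)) * (1 / (n:ℝ)^2) * ((|(n:ℝ)| * p) * (|(n:ℝ)| * p)) := by
              have hnn : ((n:ℝ))^2 = |(n:ℝ)|^2 := (_root_.sq_abs _).symm
              field_simp
              nlinarith [hnn]
          _ ≤ _ := by
              apply mul_le_mul_of_nonneg_left _ (by positivity)
              exact mul_le_mul b1 b2 hnp0.le (norm_nonneg _)
      exact Set.Finite.subset (Set.finite_singleton 0) this
  -- conclude
  have hmain := has_pointwise_sum_fourier_series_of_summable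
    (f := (⟨g, hgcont⟩ : C(AddCircle (1:ℝ), ℂ))) hsummable ((x : ℝ) : AddCircle (1:ℝ))
  have hxq : ((x : ℝ) : AddCircle (1:ℝ)) = ((Int.fract x : ℝ) : AddCircle (1:ℝ)) := by
    rw [QuotientAddGroup.eq_iff_sub_mem]
    exact ⟨⌊x⌋, by simp [Int.self_sub_fract]⟩
  have hgx : g ((x : ℝ) : AddCircle (1:ℝ))
      = ((L * (r ^ (D * Int.fract x) / (1 - r ^ D)
          + r ^ ((D - 1) * Int.fract x) / (r ^ (D - 1) - 1)) : ℝ) : ℂ) := by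
    rw [hxq, hgdef,
      AddCircle.liftIco_zero_coe_apply ⟨Int.fract_nonneg x, Int.fract_lt_one x⟩]
  have hterm : ∀ n : ℤ, fourierCoeff g n • fourier n ((x : ℝ) : AddCircle (1:ℝ))
      = Complex.exp (2 * Real.pi * Complex.I * n * x) /
        (((D : ℂ) + n * p * Complex.I) * (1 - (D : ℂ) - n * p * Complex.I)) := by
    intro n
    rw [smul_eq_mul, hcoeff n, fourier_coe_apply]
    rw [div_mul_eq_mul_div, one_mul]
    norm_num
  convert hmain using 1
  · funext n
    exact (hterm n).symm
  · exact hgx.symm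
end

section
/- Let r_1, r_2 ∈ (0,1) with r_1 + r_2 < 1, and suppose α = log r_2 / log r_1 is irrational (nonlattice case with N = 2). Then the equation r_1^ω + r_2^ω = 1 has infinitely many complex solutions ω. -/
open Complex Metric Set NNReal

/-- Dirichlet-type approximation with arbitrarily large denominator. -/
private lemma key_approx (x : ℝ) {δ : ℝ} (hδ : 0 < δ) (N : ℝ) :
    ∃ k p : ℤ, N ≤ (k : ℝ) ∧ |(k : ℝ) * x - (p : ℝ)| < δ := by
  set c : ℕ := max 1 ⌈N⌉₊ with hc
  have hc1 : 1 ≤ c := le_max_left _ _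
  have hcpos : (0 : ℝ) < c := by exact_mod_cast hc1
  have hNc : N ≤ (c : ℝ) := by
    calc N ≤ (⌈N⌉₊ : ℝ) := Nat.le_ceil N
    _ ≤ (c : ℝ) := by exact_mod_cast le_max_right 1 ⌈N⌉₊
  set n : ℕ := ⌈(c : ℝ) / δ⌉₊ + 1 with hn
  have hnpos : 0 < n := Nat.succ_pos _
  have hlt : (c : ℝ) / δ < (n : ℝ) + 1 := by
    calc (c : ℝ) / δ ≤ (⌈(c : ℝ) / δ⌉₊ : ℝ) := Nat.le_ceil _
    _ < (n : ℝ) + 1 := by push_cast [hn]; linarith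
  obtain ⟨j, k, hk0, hkn, hjk⟩ := Real.exists_int_int_abs_mul_sub_le x hnpos
  refine ⟨(c : ℤ) * k, (c : ℤ) * j, ?_, ?_⟩
  · have hk1 : (1 : ℝ) ≤ (k : ℝ) := by exact_mod_cast hk0
    calc N ≤ (c : ℝ) := hNc
    _ ≤ (c : ℝ) * k := le_mul_of_one_le_right hcpos.le hk1
    _ = (((c : ℤ) * k : ℤ) : ℝ) := by push_cast; ring
  · have h0 : (((c : ℤ) * k : ℤ) : ℝ) * x - (((c : ℤ) * j : ℤ) : ℝ)
        = (c : ℝ) * ((k : ℝ) * x - (j : ℝ)) := by push_cast; ring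
    rw [h0, abs_mul, abs_of_pos hcpos]
    have h2 : (c : ℝ) * |(k : ℝ) * x - j| ≤ (c : ℝ) * (1 / ((n : ℝ) + 1)) :=
      mul_le_mul_of_nonneg_left hjk hcpos.le
    have h3 : (c : ℝ) * (1 / ((n : ℝ) + 1)) < δ := by
      rw [mul_one_div, div_lt_iff₀ (by positivity)]
      calc (c : ℝ) = ((c : ℝ) / δ) * δ := by field_simp
      _ < ((n : ℝ) + 1) * δ := by
          exact mul_lt_mul_of_pos_right hlt hδ
      _ = δ * ((n : ℝ) + 1) := by ring
    linarith

private lemma norm_one_sub_mul_exp_le {u : ℂ} (hu : ‖u‖ = 1) {z : ℂ} (hz : ‖z‖ ≤ 1) :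
    ‖1 - u * Complex.exp z‖ ≤ ‖1 - u‖ + 2 * ‖z‖ := by
  have h1 : (1 : ℂ) - u * Complex.exp z = (1 - u) - u * (Complex.exp z - 1) := by ring
  rw [h1]
  calc ‖(1 - u) - u * (Complex.exp z - 1)‖
      ≤ ‖1 - u‖ + ‖u * (Complex.exp z - 1)‖ := norm_sub_le _ _
  _ = ‖1 - u‖ + ‖Complex.exp z - 1‖ := by rw [norm_mul, hu, one_mul]
  _ ≤ ‖1 - u‖ + 2 * ‖z‖ := by
      have h := Complex.norm_exp_sub_one_le (x := z) hz
      linarith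

set_option maxHeartbeats 1000000 in
/-- Contraction-mapping step: a zero of `a u₁ e^{w l₁} + b u₂ e^{w l₂} = 1` exists in a small
ball when `u₁, u₂` are close to `1`. -/
private lemma key_zero (a b l₁ l₂ m M ρ ε : ℝ)
    (ha : 0 < a) (hb : 0 < b) (hab : a + b = 1)
    (hl₁ : l₁ < 0) (hl₂ : l₂ < 0)
    (hm : m = -(a * l₁ + b * l₂)) (hM : M = max (-l₁) (-l₂))
    (hρ : ρ = 1 / (8 * M)) (hε : ε = min (1 / 4) (m * ρ / 2))
    (u₁ u₂ : ℂ) (hu₁ : ‖u₁‖ = 1) (hu₂ : ‖u₂‖ = 1)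
    (he₁ : ‖1 - u₁‖ ≤ ε) (he₂ : ‖1 - u₂‖ ≤ ε) :
    ∃ w : ℂ, ‖w‖ ≤ ρ ∧
      (a : ℂ) * u₁ * Complex.exp (w * (l₁ : ℂ)) + (b : ℂ) * u₂ * Complex.exp (w * (l₂ : ℂ)) = 1 := by
  have hM₁ : -l₁ ≤ M := hM ▸ le_max_left _ _
  have hM₂ : -l₂ ≤ M := hM ▸ le_max_right _ _
  have hMpos : 0 < M := lt_of_lt_of_le (by linarith) hM₁
  have hmpos : 0 < m := by rw [hm]; nlinarith
  have hmM : m ≤ M := by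
    rw [hm]
    nlinarith [mul_le_mul_of_nonneg_left hM₁ ha.le, mul_le_mul_of_nonneg_left hM₂ hb.le]
  have hρpos : 0 < ρ := by rw [hρ]; positivity
  have hρM : ρ * M = 1 / 8 := by
    rw [hρ]
    field_simp
  have hε4 : ε ≤ 1 / 4 := hε ▸ min_le_left _ _
  have hεmρ : ε ≤ m * ρ / 2 := hε ▸ min_le_right _ _
  have hεpos : 0 < ε := by rw [hε]; apply lt_min <;> positivity
  set c : ℝ := a * l₁ + b * l₂ with hcdef
  have hcm : c = -m := by rw [hm]; ring
  have hcC : ‖(c : ℂ)‖ = m := by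
    rw [Complex.norm_real, Real.norm_eq_abs, hcm, abs_neg, abs_of_pos hmpos]
  have hc0 : (c : ℂ) ≠ 0 := by
    intro h
    rw [h, norm_zero] at hcC
    exact hmpos.ne hcC
  set F : ℂ → ℂ := fun w =>
    (a : ℂ) * u₁ * Complex.exp (w * (l₁ : ℂ)) + (b : ℂ) * u₂ * Complex.exp (w * (l₂ : ℂ)) - 1
    with hF
  set F' : ℂ → ℂ := fun w =>
    (a : ℂ) * u₁ * (l₁ : ℂ) * Complex.exp (w * (l₁ : ℂ)) +
      (b : ℂ) * u₂ * (l₂ : ℂ) * Complex.exp (w * (l₂ : ℂ)) with hF'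
  set Φ : ℂ → ℂ := fun w => w - F w / (c : ℂ) with hΦ
  have hder : ∀ w : ℂ, HasDerivAt Φ (1 - F' w / (c : ℂ)) w := by
    intro w
    have h1 : HasDerivAt (fun w : ℂ => Complex.exp (w * (l₁ : ℂ)))
        (Complex.exp (w * (l₁ : ℂ)) * (l₁ : ℂ)) w := by
      simpa using ((hasDerivAt_id w).mul_const (l₁ : ℂ)).cexp
    have h2 : HasDerivAt (fun w : ℂ => Complex.exp (w * (l₂ : ℂ)))
        (Complex.exp (w * (l₂ : ℂ)) * (l₂ : ℂ)) w := by
      simpa using ((hasDerivAt_id w).mul_const (l₂ : ℂ)).cexp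
    have h3 : HasDerivAt F
        ((a : ℂ) * u₁ * (Complex.exp (w * (l₁ : ℂ)) * (l₁ : ℂ)) +
          (b : ℂ) * u₂ * (Complex.exp (w * (l₂ : ℂ)) * (l₂ : ℂ))) w := by
      exact ((h1.const_mul ((a : ℂ) * u₁)).add (h2.const_mul ((b : ℂ) * u₂))).sub_const 1
    have h4 := (hasDerivAt_id w).sub (h3.div_const (c : ℂ))
    refine HasDerivAt.congr_deriv h4 ?_
    rw [hF']
    ring
  have hbound : ∀ w ∈ closedBall (0 : ℂ) ρ, ‖1 - F' w / (c : ℂ)‖ ≤ 1 / 2 := by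
    intro w hw
    have hwρ : ‖w‖ ≤ ρ := by rwa [mem_closedBall, dist_zero_right] at hw
    have hsplit : (1 : ℂ) - F' w / (c : ℂ) = ((c : ℂ) - F' w) / (c : ℂ) := by
      field_simp
    rw [hsplit, norm_div, hcC, div_le_iff₀ hmpos]
    have hkey : (c : ℂ) - F' w =
        (a : ℂ) * (l₁ : ℂ) * (1 - u₁ * Complex.exp (w * (l₁ : ℂ))) +
          (b : ℂ) * (l₂ : ℂ) * (1 - u₂ * Complex.exp (w * (l₂ : ℂ))) := by
      rw [hF', hcdef]
      push_cast
      ring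
    have hz₁ : ‖w * (l₁ : ℂ)‖ ≤ ρ * M := by
      rw [norm_mul, Complex.norm_real, Real.norm_eq_abs, abs_of_neg hl₁]
      exact mul_le_mul hwρ hM₁ (by linarith) hρpos.le
    have hz₂ : ‖w * (l₂ : ℂ)‖ ≤ ρ * M := by
      rw [norm_mul, Complex.norm_real, Real.norm_eq_abs, abs_of_neg hl₂]
      exact mul_le_mul hwρ hM₂ (by linarith) hρpos.le
    have hv₁ : ‖1 - u₁ * Complex.exp (w * (l₁ : ℂ))‖ ≤ 1 / 2 := by
      have := norm_one_sub_mul_exp_le hu₁ (z := w * (l₁ : ℂ)) (by rw [hρM] at hz₁; linarith)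
      have h2 : ‖w * (l₁ : ℂ)‖ ≤ 1 / 8 := by rw [hρM] at hz₁; linarith
      linarith
    have hv₂ : ‖1 - u₂ * Complex.exp (w * (l₂ : ℂ))‖ ≤ 1 / 2 := by
      have := norm_one_sub_mul_exp_le hu₂ (z := w * (l₂ : ℂ)) (by rw [hρM] at hz₂; linarith)
      have h2 : ‖w * (l₂ : ℂ)‖ ≤ 1 / 8 := by rw [hρM] at hz₂; linarith
      linarith
    calc ‖(c : ℂ) - F' w‖
        ≤ ‖(a : ℂ) * (l₁ : ℂ) * (1 - u₁ * Complex.exp (w * (l₁ : ℂ)))‖ +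
          ‖(b : ℂ) * (l₂ : ℂ) * (1 - u₂ * Complex.exp (w * (l₂ : ℂ)))‖ := by
          rw [hkey]; exact norm_add_le _ _
    _ = a * (-l₁) * ‖1 - u₁ * Complex.exp (w * (l₁ : ℂ))‖ +
          b * (-l₂) * ‖1 - u₂ * Complex.exp (w * (l₂ : ℂ))‖ := by
          rw [norm_mul, norm_mul, norm_mul, norm_mul]
          rw [Complex.norm_real, Complex.norm_real, Complex.norm_real, Complex.norm_real]
          rw [Real.norm_eq_abs, Real.norm_eq_abs, Real.norm_eq_abs, Real.norm_eq_abs]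
          rw [abs_of_pos ha, abs_of_pos hb, abs_of_neg hl₁, abs_of_neg hl₂]
    _ ≤ a * (-l₁) * (1 / 2) + b * (-l₂) * (1 / 2) := by
          have t₁ : 0 ≤ a * (-l₁) := by nlinarith
          have t₂ : 0 ≤ b * (-l₂) := by nlinarith
          nlinarith
    _ = 1 / 2 * m := by rw [hm]; ring
  have hlip : LipschitzOnWith (1 / 2 : ℝ≥0) Φ (closedBall (0 : ℂ) ρ) := by
    apply (convex_closedBall (0 : ℂ) ρ).lipschitzOnWith_of_nnnorm_hasDerivWithin_le
      (f' := fun w => 1 - F' w / (c : ℂ)) (fun x _ => (hder x).hasDerivWithinAt)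
    intro x hx
    rw [← NNReal.coe_le_coe, coe_nnnorm]
    push_cast
    exact hbound x hx
  have hΦ0 : ‖Φ 0‖ ≤ ρ / 2 := by
    have hF0 : F 0 = (a : ℂ) * (u₁ - 1) + (b : ℂ) * (u₂ - 1) := by
      have habC : (a : ℂ) + (b : ℂ) = 1 := by exact_mod_cast congrArg (Complex.ofReal) hab
      rw [hF]
      simp only [zero_mul, Complex.exp_zero, mul_one]
      linear_combination habC
    have hnF0 : ‖F 0‖ ≤ ε := by
      rw [hF0]
      calc ‖(a : ℂ) * (u₁ - 1) + (b : ℂ) * (u₂ - 1)‖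
          ≤ ‖(a : ℂ) * (u₁ - 1)‖ + ‖(b : ℂ) * (u₂ - 1)‖ := norm_add_le _ _
      _ = a * ‖u₁ - 1‖ + b * ‖u₂ - 1‖ := by
          rw [norm_mul, norm_mul, Complex.norm_real, Complex.norm_real,
            Real.norm_eq_abs, Real.norm_eq_abs, abs_of_pos ha, abs_of_pos hb]
      _ ≤ a * ε + b * ε := by
          rw [norm_sub_rev u₁ 1, norm_sub_rev u₂ 1] at *
          nlinarith [norm_nonneg (u₁ - 1), norm_nonneg (u₂ - 1)]
      _ = ε := by linear_combination ε * hab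
    have : Φ 0 = -(F 0 / (c : ℂ)) := by rw [hΦ]; ring_nf
    rw [this, norm_neg, norm_div, hcC, div_le_iff₀ hmpos]
    nlinarith
  have hmaps : MapsTo Φ (closedBall (0 : ℂ) ρ) (closedBall (0 : ℂ) ρ) := by
    intro w hw
    have h0mem : (0 : ℂ) ∈ closedBall (0 : ℂ) ρ := mem_closedBall_self hρpos.le
    have hd : dist (Φ w) (Φ 0) ≤ (1 / 2 : ℝ≥0) * dist w 0 := hlip.dist_le_mul w hw 0 h0mem
    rw [mem_closedBall, dist_zero_right] at hw ⊢
    rw [dist_eq_norm, dist_zero_right] at hd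
    push_cast at hd
    calc ‖Φ w‖ ≤ ‖Φ w - Φ 0‖ + ‖Φ 0‖ := by
          have := norm_add_le (Φ w - Φ 0) (Φ 0); simpa using this
    _ ≤ 1 / 2 * ‖w‖ + ρ / 2 := by linarith
    _ ≤ ρ := by linarith
  have hcontr : ContractingWith (1 / 2 : ℝ≥0) (hmaps.restrict Φ _ _) := by
    refine ⟨?_, hlip.mapsToRestrict hmaps⟩
    rw [← NNReal.coe_lt_coe]
    norm_num
  obtain ⟨y, hymem, hyfix, -, -⟩ := hcontr.exists_fixedPoint'
    Metric.isClosed_closedBall.isComplete hmaps (mem_closedBall_self hρpos.le) (edist_ne_top _ _)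
  refine ⟨y, by rwa [mem_closedBall, dist_zero_right] at hymem, ?_⟩
  have hFy : F y = 0 := by
    have h := hyfix
    rw [Function.IsFixedPt, hΦ] at h
    have : F y / (c : ℂ) = 0 := by linear_combination -h
    field_simp at this
    simpa using this
  rw [hF] at hFy
  linear_combination hFy

set_option maxHeartbeats 1000000 in
/-- In the nonlattice case with two scaling ratios, the equation
`r₁^ω + r₂^ω = 1` has infinitely many complex solutions. -/
theorem stmt_18 (r₁ r₂ : ℝ) (h₁0 : 0 < r₁) (h₁1 : r₁ < 1)
    (h₂0 : 0 < r₂) (h₂1 : r₂ < 1) (hsum : r₁ + r₂ < 1)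
    (hirr : Irrational (Real.log r₂ / Real.log r₁)) :
    {ω : ℂ | Complex.exp (ω * Real.log r₁) + Complex.exp (ω * Real.log r₂) = 1}.Infinite := by
  set l₁ := Real.log r₁ with hl₁def
  set l₂ := Real.log r₂ with hl₂def
  have hl₁ : l₁ < 0 := Real.log_neg h₁0 h₁1
  have hl₂ : l₂ < 0 := Real.log_neg h₂0 h₂1
  -- find the real root D
  obtain ⟨D, hD⟩ : ∃ D : ℝ, Real.exp (D * l₁) + Real.exp (D * l₂) = 1 := by
    have hcont : ContinuousOn (fun x : ℝ => Real.exp (x * l₁) + Real.exp (x * l₂))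
        (Set.Icc 0 1) := by fun_prop
    have h := intermediate_value_Icc' (by norm_num : (0 : ℝ) ≤ 1) hcont
    have h1 : Real.exp (1 * l₁) + Real.exp (1 * l₂) = r₁ + r₂ := by
      rw [one_mul, one_mul, hl₁def, hl₂def, Real.exp_log h₁0, Real.exp_log h₂0]
    have h0 : Real.exp (0 * l₁) + Real.exp (0 * l₂) = 2 := by norm_num
    have hmem : (1 : ℝ) ∈ Set.Icc (Real.exp (1 * l₁) + Real.exp (1 * l₂))
        (Real.exp (0 * l₁) + Real.exp (0 * l₂)) := by
      rw [h1, h0]; constructor <;> linarith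
    obtain ⟨D, _, hfD⟩ := h hmem
    exact ⟨D, hfD⟩
  set a := Real.exp (D * l₁) with hadef
  set b := Real.exp (D * l₂) with hbdef
  have ha : 0 < a := Real.exp_pos _
  have hb : 0 < b := Real.exp_pos _
  set m : ℝ := -(a * l₁ + b * l₂) with hm
  set M : ℝ := max (-l₁) (-l₂) with hM
  set ρ : ℝ := 1 / (8 * M) with hρ
  set ε : ℝ := min (1 / 4) (m * ρ / 2) with hε
  have hMpos : 0 < M := lt_of_lt_of_le (by linarith : (0:ℝ) < -l₁) (le_max_left _ _)
  have hmpos : 0 < m := by rw [hm]; nlinarith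
  have hρpos : 0 < ρ := by rw [hρ]; positivity
  have hεpos : 0 < ε := by rw [hε]; apply lt_min <;> positivity
  have hπ : 0 < Real.pi := Real.pi_pos
  -- main claim: solutions with arbitrarily large imaginary part
  suffices h : ∀ n : ℕ, ∃ ω ∈ {ω : ℂ |
      Complex.exp (ω * (l₁ : ℂ)) + Complex.exp (ω * (l₂ : ℂ)) = 1}, (n : ℝ) < ω.im by
    by_contra hfin
    rw [Set.not_infinite] at hfin
    obtain ⟨B, hB⟩ := (hfin.image Complex.im).bddAbove
    obtain ⟨n, hn⟩ := exists_nat_gt B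
    obtain ⟨ω, hω, him⟩ := h n
    have : ω.im ≤ B := hB (Set.mem_image_of_mem _ hω)
    linarith
  intro n
  -- choose k with k large and k * (l₂/l₁) close to an integer
  have hδpos : 0 < min (ε / (4 * Real.pi)) (1 / (4 * Real.pi)) := by
    apply lt_min <;> positivity
  obtain ⟨k, p, hkN, hkp⟩ := key_approx (l₂ / l₁) hδpos
    (((n : ℝ) + ρ + 1) * (-l₁) / (2 * Real.pi))
  set δ := min (ε / (4 * Real.pi)) (1 / (4 * Real.pi)) with hδ
  have hδε : δ ≤ ε / (4 * Real.pi) := min_le_left _ _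
  have hδ1 : δ ≤ 1 / (4 * Real.pi) := min_le_right _ _
  set t : ℝ := 2 * Real.pi * k / (-l₁) with ht
  have hl₁ne : l₁ ≠ 0 := hl₁.ne
  have hposl : (0:ℝ) < -l₁ := by linarith
  have htlarge : (n : ℝ) + ρ + 1 ≤ t := by
    have h1 : ((n : ℝ) + ρ + 1) * (-l₁) ≤ 2 * Real.pi * k := by
      have h2 := (div_le_iff₀ (by positivity : (0:ℝ) < 2 * Real.pi)).mp hkN
      linarith
    rw [ht, le_div_iff₀ hposl]
    exact h1
  have hml₁ : t * (-l₁) = 2 * Real.pi * k := by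
    rw [ht]; exact div_mul_cancel₀ _ (ne_of_gt hposl)
  have htl₁ : t * l₁ = -(k : ℝ) * (2 * Real.pi) := by linear_combination -hml₁
  have htl₂ : t * l₂ = -2 * Real.pi * ((k : ℝ) * (l₂ / l₁)) := by
    rw [ht, div_neg]; ring
  set u₁ : ℂ := Complex.exp ((t * l₁ : ℝ) * Complex.I) with hu₁def
  set u₂ : ℂ := Complex.exp ((t * l₂ : ℝ) * Complex.I) with hu₂def
  have hu₁ : u₁ = 1 := by
    rw [hu₁def, htl₁]
    have : ((-(k : ℝ) * (2 * Real.pi) : ℝ) : ℂ) * Complex.I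
        = ((-k : ℤ) : ℂ) * (2 * Real.pi * Complex.I) := by push_cast; ring
    rw [this, Complex.exp_int_mul_two_pi_mul_I]
  have hu₁norm : ‖u₁‖ = 1 := by rw [hu₁]; simp
  have hu₂norm : ‖u₂‖ = 1 := by rw [hu₂def]; exact Complex.norm_exp_ofReal_mul_I _
  have he₁ : ‖1 - u₁‖ ≤ ε := by rw [hu₁]; simpa using hεpos.le
  have he₂ : ‖1 - u₂‖ ≤ ε := by
    set θ : ℝ := -2 * Real.pi * ((k : ℝ) * (l₂ / l₁) - p) with hθ
    have hsplit : u₂ = Complex.exp ((θ : ℝ) * Complex.I) := by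
      rw [hu₂def, htl₂]
      have : ((-2 * Real.pi * ((k : ℝ) * (l₂ / l₁)) : ℝ) : ℂ) * Complex.I
          = (θ : ℝ) * Complex.I + ((-p : ℤ) : ℂ) * (2 * Real.pi * Complex.I) := by
        rw [hθ]; push_cast; ring
      rw [this, Complex.exp_add, Complex.exp_int_mul_two_pi_mul_I, mul_one]
    have hθabs : |θ| < 2 * Real.pi * δ := by
      rw [hθ, abs_mul, abs_of_nonpos (by linarith : -2 * Real.pi ≤ 0)]
      have : -(-2 * Real.pi) = 2 * Real.pi := by ring
      rw [this]
      exact mul_lt_mul_of_pos_left hkp (by positivity)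
    have hθsmall : ‖((θ : ℝ) : ℂ) * Complex.I‖ ≤ 1 := by
      rw [norm_mul, Complex.norm_I, mul_one, Complex.norm_real, Real.norm_eq_abs]
      have : 2 * Real.pi * δ ≤ 2 * Real.pi * (1 / (4 * Real.pi)) :=
        mul_le_mul_of_nonneg_left hδ1 (by positivity)
      have h2 : 2 * Real.pi * (1 / (4 * Real.pi)) = 1 / 2 := by field_simp; ring
      linarith
    have hexp : ‖Complex.exp ((θ : ℝ) * Complex.I) - 1‖ ≤ 2 * ‖((θ : ℝ) : ℂ) * Complex.I‖ := by
      have h := Complex.norm_exp_sub_one_le (x := (θ : ℝ) * Complex.I)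
        hθsmall
      exact h
    rw [norm_sub_rev, hsplit]
    have hnθ : ‖((θ : ℝ) : ℂ) * Complex.I‖ = |θ| := by
      rw [norm_mul, Complex.norm_I, mul_one, Complex.norm_real, Real.norm_eq_abs]
    rw [hnθ] at hexp
    have h4 : 2 * |θ| ≤ ε := by
      have h5 : 2 * Real.pi * δ ≤ 2 * Real.pi * (ε / (4 * Real.pi)) :=
        mul_le_mul_of_nonneg_left hδε (by positivity)
      have h6 : 2 * Real.pi * (ε / (4 * Real.pi)) = ε / 2 := by field_simp; ring
      linarith
    linarith
  obtain ⟨w, hwρ, hweq⟩ := key_zero a b l₁ l₂ m M ρ ε ha hb hD hl₁ hl₂ hm hM hρ hε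
    u₁ u₂ hu₁norm hu₂norm he₁ he₂
  refine ⟨(D : ℂ) + (t : ℝ) * Complex.I + w, ?_, ?_⟩
  · show Complex.exp _ + Complex.exp _ = 1
    have e₁ : Complex.exp (((D : ℂ) + (t : ℝ) * Complex.I + w) * (l₁ : ℂ))
        = (a : ℂ) * u₁ * Complex.exp (w * (l₁ : ℂ)) := by
      have harg : ((D : ℂ) + (t : ℝ) * Complex.I + w) * (l₁ : ℂ)
          = ((D * l₁ : ℝ) : ℂ) + ((t * l₁ : ℝ) : ℂ) * Complex.I + w * (l₁ : ℂ) := by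
        push_cast; ring
      rw [harg, Complex.exp_add, Complex.exp_add, hadef, hu₁def]
      rw [← Complex.ofReal_exp]
    have e₂ : Complex.exp (((D : ℂ) + (t : ℝ) * Complex.I + w) * (l₂ : ℂ))
        = (b : ℂ) * u₂ * Complex.exp (w * (l₂ : ℂ)) := by
      have harg : ((D : ℂ) + (t : ℝ) * Complex.I + w) * (l₂ : ℂ)
          = ((D * l₂ : ℝ) : ℂ) + ((t * l₂ : ℝ) : ℂ) * Complex.I + w * (l₂ : ℂ) := by
        push_cast; ring
      rw [harg, Complex.exp_add, Complex.exp_add, hbdef, hu₂def]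
      rw [← Complex.ofReal_exp]
    rw [e₁, e₂]
    exact hweq
  · have him : ((D : ℂ) + (t : ℝ) * Complex.I + w).im = t + w.im := by simp
    rw [him]
    have : |w.im| ≤ ρ := le_trans (Complex.abs_im_le_norm w) hwρ
    have h7 : -ρ ≤ w.im := by cases abs_le.mp this; linarith
    linarith
end
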